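/- arXiv:math/0511695 — 6 statements merged into one kernel-verified Lean document; each statement's English description precedes it below -/
import Mathlib

section
/- Let A, B, C, D be finite multisets on ℕ with |A ⊎ D| = |B ⊎ C|. Define A − C ≤ B − D to mean A ⊎ D ≤ B ⊎ C in the termwise order on multisets. Then this relation is transitive: if A − C ≤ B − D and B − D ≤ E − F (with the appropriate cardinality conditions), then A − C ≤ E − F. -/
/-!
Comparing sorted lists termwise is the same as comparing their counting functions
`N_X t = #{x ∈ X | x < t}` pointwise in the opposite direction: the `i`-th smallest element is
below `t` exactly when more than `i` elements are. Counting functions are additive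
under `⊎`, so `A ⊎ D ≤ B ⊎ C` becomes `N_B + N_C ≤ N_A + N_D`, and transitivity is the
sum of two such linear inequalities with `N_B` and `N_D` cancelling.
-/

/-- Termwise order on finite multisets on ℕ: same cardinality, and the i-th
smallest element of `A` is at most the i-th smallest element of `B`. -/
noncomputable def twLE (A B : Multiset ℕ) : Prop :=
  Multiset.card A = Multiset.card B ∧
    ∀ i, (A.sort (· ≤ ·)).getD i 0 ≤ (B.sort (· ≤ ·)).getD i 0

namespace List

theorem forall_getD_le_iff {α : Type*} [Preorder α] {l m : List α} (d : α)
    (hlen : l.length = m.length) :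
    (∀ i, l.getD i d ≤ m.getD i d) ↔ ∀ i (hi : i < l.length), l[i] ≤ m[i] := by
  refine ⟨fun h i hi => ?_, fun h i => ?_⟩
  · simpa only [getD_eq_getElem _ _ hi, getD_eq_getElem _ _ (hlen ▸ hi)] using h i
  · by_cases hi : i < l.length
    · rw [getD_eq_getElem _ _ hi, getD_eq_getElem _ _ (hlen ▸ hi)]
      exact h i hi
    · rw [getD_eq_default _ _ (not_lt.mp hi), getD_eq_default _ _ (hlen ▸ not_lt.mp hi)]

variable {α : Type*} [LinearOrder α] {l m : List α}

theorem SortedLE.getElem_lt_iff_lt_countP (hl : l.SortedLE) (t : α) {i : ℕ}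
    (hi : i < l.length) : l[i] < t ↔ i < l.countP (· < t) := by
  constructor
  · intro hit
    have htake : (l.take (i + 1)).countP (· < t) = i + 1 := by
      rw [countP_eq_length.mpr, length_take, min_eq_left hi]
      intro a ha
      obtain ⟨j, hj, rfl⟩ := mem_take_iff_getElem.mp ha
      exact decide_eq_true <| (hl.getElem_le_getElem_of_le (by omega)).trans_lt hit
    calc i < (l.take (i + 1)).countP (· < t) := by omega
      _ ≤ l.countP (· < t) := (take_sublist _ _).countP_le
  · intro hcount
    by_contra! hti
    have hdrop : (l.drop i).countP (· < t) = 0 := by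
      refine countP_eq_zero.mpr fun a ha => ?_
      obtain ⟨j, hj, rfl⟩ := mem_drop_iff_getElem.mp ha
      have : l[i] ≤ l[i + j] := hl.getElem_le_getElem_of_le (Nat.le_add_right _ _)
      simpa using (hti.trans this).not_gt
    have htake := (l.take i).countP_le_length (p := (· < t))
    rw [← take_append_drop i l, countP_append, hdrop] at hcount
    rw [length_take] at htake
    omega

theorem SortedLE.forall_getElem_le_iff (hl : l.SortedLE) (hm : m.SortedLE)
    (hlen : l.length = m.length) :
    (∀ i (hi : i < l.length), l[i] ≤ m[i]) ↔ ∀ t, m.countP (· < t) ≤ l.countP (· < t) := by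
  constructor
  · intro hle t
    by_contra! hlt
    set i := l.countP (· < t)
    have him : i < m.length := hlt.trans_le countP_le_length
    have hmi : m[i] < t := (hm.getElem_lt_iff_lt_countP t him).mpr hlt
    exact lt_irrefl i <| (hl.getElem_lt_iff_lt_countP t (hlen ▸ him)).mp ((hle i _).trans_lt hmi)
  · intro hcount i hi
    by_contra! hlt
    have hm_count := (hm.getElem_lt_iff_lt_countP l[i] (hlen ▸ hi)).mp hlt
    have hl_count := (hl.getElem_lt_iff_lt_countP l[i] hi).not.mp (lt_irrefl _)
    have := hcount l[i]
    omega

end List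

theorem Multiset.countP_eq_countP_sort {α : Type*} [LinearOrder α] (p : α → Prop)
    [DecidablePred p] (s : Multiset α) : s.countP p = (s.sort (· ≤ ·)).countP p := by
  conv_lhs => rw [← sort_eq s (· ≤ ·)]
  rw [coe_countP]

theorem twLE_iff_card_filter_lt (A B : Multiset ℕ) :
    twLE A B ↔ Multiset.card A = Multiset.card B ∧
      ∀ t, Multiset.card (B.filter (· < t)) ≤ Multiset.card (A.filter (· < t)) := by
  simp only [twLE, ← Multiset.countP_eq_card_filter, Multiset.countP_eq_countP_sort]
  refine and_congr_right fun hcard => ?_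
  have hlen : (A.sort (· ≤ ·)).length = (B.sort (· ≤ ·)).length := by simpa using hcard
  have hA : (A.sort (· ≤ ·)).SortedLE := (A.pairwise_sort _).sortedLE
  have hB : (B.sort (· ≤ ·)).SortedLE := (B.pairwise_sort _).sortedLE
  rw [List.forall_getD_le_iff 0 hlen, hA.forall_getElem_le_iff hB hlen]

/-- `A − C ≤ B − D` (defined as `A ⊎ D ≤ B ⊎ C`) is a transitive relation:
if `A − C ≤ B − D` and `B − D ≤ E − F` then `A − C ≤ E − F`. -/
theorem diff_le_trans (A B C D E F : Multiset ℕ)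
    (h1 : twLE (A + D) (B + C)) (h2 : twLE (B + F) (E + D)) :
    twLE (A + F) (E + C) := by
  rw [twLE_iff_card_filter_lt] at h1 h2 ⊢
  obtain ⟨hcard1, hcount1⟩ := h1
  obtain ⟨hcard2, hcount2⟩ := h2
  simp only [Multiset.filter_add, Multiset.card_add] at *
  refine ⟨by omega, fun t => ?_⟩
  have := hcount1 t
  have := hcount2 t
  omega
end

section
/- Let R be a semistandard Young tableau and a, a' positive integers. Perform Schensted (transpose/column-style) row insertion of a into R, obtaining bumping route ρ and new box B, then insert a' into the result, obtaining bumping route ρ' and new box B'. If a ≥ a', then ρ' is weakly left of ρ and B' is strictly below B. If a < a', then ρ is strictly left of ρ' and B is weakly below B'. -/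
/-- A semistandard Young tableau (allowing trailing empty rows). -/
def IsSSYT (T : List (List ℕ)) : Prop :=
  (∀ r ∈ T, List.Chain' (· < ·) r) ∧
  (∀ i, (T.getD (i + 1) []).length ≤ (T.getD i []).length) ∧
  (∀ i j, j < (T.getD (i + 1) []).length →
    (T.getD i []).getD j 0 ≤ (T.getD (i + 1) []).getD j 0)

/-- Schensted (transpose/column-style) row insertion.  Returns the new tableau
together with the bumping route, recorded as the list of column indices of the
boxes of the route (the entry for row `i` is the `i`-th member of the list);
the last member of the list is the column of the new box, which lies in row
`(route.length - 1)`. -/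
def ins : List (List ℕ) → ℕ → List (List ℕ) × List ℕ
  | [], a => ([[a]], [0])
  | r :: rs, a =>
    match r.findIdx? (fun x => decide (a ≤ x)) with
    | none => ((r ++ [a]) :: rs, [r.length])
    | some j =>
      let p := ins rs (r.getD j 0)
      ((r.set j a) :: p.1, j :: p.2)

/-! The two insertions are compared row by row. In a strictly increasing row the first
insertion puts `a` at the first position `j` with `a ≤ r[j]`, bumping `b = r[j]`. If `a' ≤ a`,
the second insertion stops at some `j' ≤ j` and bumps a value `b' ≤ b`; if `a < a'`, it goes
strictly right of `j` and either ends the route there or bumps a value `b' > b`. The pair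
`(b, b')` is thus in the same relation as `(a, a')`, and induction over the rows gives both
claims. -/

namespace List

theorem exists_findIdx?_eq_some_le {α : Type*} {p : α → Bool} {xs : List α} {j : ℕ}
    (hj : j < xs.length) (hp : p xs[j]) : ∃ j' ≤ j, xs.findIdx? p = some j' := by
  obtain ⟨j', hj'⟩ := Option.isSome_iff_exists.mp
    (findIdx?_isSome.trans (any_eq_true.mpr ⟨_, getElem_mem hj, hp⟩))
  obtain ⟨_, _, hmin⟩ := findIdx?_eq_some_iff_getElem.mp hj'
  exact ⟨j', not_lt.mp fun hlt => hmin j hlt hp, hj'⟩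

theorem lt_of_findIdx?_eq_some {α : Type*} {p : α → Bool} {xs : List α} {j j' : ℕ}
    (hfalse : ∀ k (hk : k < xs.length), k ≤ j → p xs[k] = false)
    (h : xs.findIdx? p = some j') : j < j' := by
  obtain ⟨hj', hp, -⟩ := findIdx?_eq_some_iff_getElem.mp h
  by_contra! hle
  simp [hfalse j' hj' hle] at hp

end List

def IsWeaklyLeftOf (ρ' ρ : List ℕ) : Prop :=
  ∀ i, i < ρ.length → i < ρ'.length ∧ ρ'.getD i 0 ≤ ρ.getD i 0

def IsStrictlyLeftOf (ρ ρ' : List ℕ) : Prop :=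
  ∀ i, i < ρ'.length → i < ρ.length ∧ ρ.getD i 0 < ρ'.getD i 0

theorem isWeaklyLeftOf_nil (ρ' : List ℕ) : IsWeaklyLeftOf ρ' [] :=
  fun _ h => absurd h (Nat.not_lt_zero _)

theorem isWeaklyLeftOf_cons_cons {j j' : ℕ} {ρ ρ' : List ℕ} :
    IsWeaklyLeftOf (j' :: ρ') (j :: ρ) ↔ j' ≤ j ∧ IsWeaklyLeftOf ρ' ρ := by
  constructor
  · intro h
    exact ⟨by simpa using (h 0 (by simp)).2, fun i hi => by simpa using h (i + 1) (by simpa)⟩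
  · rintro ⟨hj, hρ⟩ (_ | i) hi
    · simpa using hj
    · simpa using hρ i (by simpa using hi)

theorem isStrictlyLeftOf_nil (ρ : List ℕ) : IsStrictlyLeftOf ρ [] :=
  fun _ h => absurd h (Nat.not_lt_zero _)

theorem isStrictlyLeftOf_cons_cons {j j' : ℕ} {ρ ρ' : List ℕ} :
    IsStrictlyLeftOf (j :: ρ) (j' :: ρ') ↔ j < j' ∧ IsStrictlyLeftOf ρ ρ' := by
  constructor
  · intro h
    exact ⟨by simpa using (h 0 (by simp)).2, fun i hi => by simpa using h (i + 1) (by simpa)⟩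
  · rintro ⟨hj, hρ⟩ (_ | i) hi
    · simpa using hj
    · simpa using hρ i (by simpa using hi)

theorem ins_nil (a : ℕ) : ins [] a = ([[a]], [0]) := rfl

theorem ins_cons_of_findIdx?_eq_none {r : List ℕ} {rs : List (List ℕ)} {a : ℕ}
    (h : r.findIdx? (a ≤ ·) = none) : ins (r :: rs) a = ((r ++ [a]) :: rs, [r.length]) := by
  rw [ins, h]

theorem ins_cons_of_findIdx?_eq_some {r : List ℕ} {rs : List (List ℕ)} {a j : ℕ}
    (h : r.findIdx? (a ≤ ·) = some j) :
    ins (r :: rs) a = (r.set j a :: (ins rs (r.getD j 0)).1, j :: (ins rs (r.getD j 0)).2) := by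
  rw [ins, h]

theorem length_ins_snd_pos (T : List (List ℕ)) (a : ℕ) : 0 < (ins T a).2.length := by
  unfold ins
  split
  · simp
  · split <;> simp

section Row

variable {r : List ℕ} {a a' j j' : ℕ}

theorem exists_findIdx?_append_singleton_of_le (h : a' ≤ a) :
    ∃ j' ≤ r.length, (r ++ [a]).findIdx? (a' ≤ ·) = some j' :=
  List.exists_findIdx?_eq_some_le (by simp) (by simpa using h)

theorem findIdx?_append_singleton_of_lt (hr : r.findIdx? (a ≤ ·) = none) (h : a < a') :
    (r ++ [a]).findIdx? (a' ≤ ·) = none := by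
  simp only [List.findIdx?_eq_none_iff, List.mem_append, List.mem_singleton,
    decide_eq_false_iff_not, not_le] at hr ⊢
  rintro x (hx | rfl)
  · exact (hr x hx).trans h
  · exact h

theorem exists_findIdx?_set_of_le (hr : r.Pairwise (· < ·)) (hj : r.findIdx? (a ≤ ·) = some j)
    (h : a' ≤ a) :
    ∃ j' ≤ j, (r.set j a).findIdx? (a' ≤ ·) = some j' ∧
      (r.set j a).getD j' 0 ≤ r.getD j 0 := by
  obtain ⟨hjr, hapj, -⟩ := List.findIdx?_eq_some_iff_getElem.mp hj
  obtain ⟨j', hj'j, hfind⟩ :=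
    List.exists_findIdx?_eq_some_le (xs := r.set j a) (p := (a' ≤ ·)) (by simpa using hjr)
      (by simpa using h)
  refine ⟨j', hj'j, hfind, ?_⟩
  rw [List.getD_eq_getElem _ _ (by simpa using hj'j.trans_lt hjr), List.getD_eq_getElem _ _ hjr,
    List.getElem_set]
  rcases hj'j.eq_or_lt with rfl | hlt
  · simpa using hapj
  · rw [if_neg hlt.ne']
    exact (List.pairwise_iff_getElem.mp hr _ _ _ _ hlt).le

theorem lt_of_findIdx?_set_eq_some (hr : r.Pairwise (· < ·)) (hj : r.findIdx? (a ≤ ·) = some j)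
    (h : a < a')
    (h' : (r.set j a).findIdx? (a' ≤ ·) = some j') :
    j < j' ∧ r.getD j 0 < (r.set j a).getD j' 0 := by
  obtain ⟨hjr, -, hmin⟩ := List.findIdx?_eq_some_iff_getElem.mp hj
  have hjj' : j < j' := by
    refine List.lt_of_findIdx?_eq_some (fun k hk hkj => ?_) h'
    rw [List.getElem_set]
    rcases hkj.eq_or_lt with rfl | hlt
    · simpa using h
    · simpa [hlt.ne'] using (lt_of_not_ge (by simpa using hmin k hlt)).trans h
  obtain ⟨hj'r, -, -⟩ := List.findIdx?_eq_some_iff_getElem.mp h'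
  refine ⟨hjj', ?_⟩
  rw [List.getD_eq_getElem _ _ hj'r, List.getD_eq_getElem _ _ hjr, List.getElem_set,
    if_neg hjj'.ne]
  exact List.pairwise_iff_getElem.mp hr _ _ _ _ hjj'

end Row

theorem isWeaklyLeftOf_ins_ins_of_le {R : List (List ℕ)} (hR : ∀ r ∈ R, r.Pairwise (· < ·))
    {a a' : ℕ} (h : a' ≤ a) :
    IsWeaklyLeftOf (ins (ins R a).1 a').2 (ins R a).2 ∧
      (ins R a).2.length < (ins (ins R a).1 a').2.length := by
  induction R generalizing a a' with
  | nil =>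
    have hfind : [a].findIdx? (a' ≤ ·) = some 0 := by simp [h]
    simp [ins_nil, ins_cons_of_findIdx?_eq_some hfind, isWeaklyLeftOf_cons_cons,
      isWeaklyLeftOf_nil]
  | cons r rs ih =>
    cases hfind : r.findIdx? (a ≤ ·) with
    | none =>
      obtain ⟨j', hj', hfind'⟩ := exists_findIdx?_append_singleton_of_le (r := r) h
      simp [ins_cons_of_findIdx?_eq_none hfind, ins_cons_of_findIdx?_eq_some hfind',
        isWeaklyLeftOf_cons_cons, isWeaklyLeftOf_nil, hj', length_ins_snd_pos]
    | some j =>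
      obtain ⟨j', hj', hfind', hbump⟩ :=
        exists_findIdx?_set_of_le (hR r List.mem_cons_self) hfind h
      obtain ⟨hleft, hlen⟩ := ih (fun q hq => hR q (List.mem_cons_of_mem r hq)) hbump
      rw [ins_cons_of_findIdx?_eq_some hfind, ins_cons_of_findIdx?_eq_some hfind',
        isWeaklyLeftOf_cons_cons]
      exact ⟨⟨hj', hleft⟩, Nat.succ_lt_succ hlen⟩

theorem isStrictlyLeftOf_ins_ins_of_lt {R : List (List ℕ)}
    (hR : ∀ r ∈ R, r.Pairwise (· < ·)) {a a' : ℕ} (h : a < a') :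
    IsStrictlyLeftOf (ins R a).2 (ins (ins R a).1 a').2 ∧
      (ins (ins R a).1 a').2.length ≤ (ins R a).2.length := by
  induction R generalizing a a' with
  | nil =>
    have hfind : [a].findIdx? (a' ≤ ·) = none := by simp [h]
    simp [ins_nil, ins_cons_of_findIdx?_eq_none hfind, isStrictlyLeftOf_cons_cons,
      isStrictlyLeftOf_nil]
  | cons r rs ih =>
    cases hfind : r.findIdx? (a ≤ ·) with
    | none =>
      simp [ins_cons_of_findIdx?_eq_none hfind,
        ins_cons_of_findIdx?_eq_none (findIdx?_append_singleton_of_lt hfind h),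
        isStrictlyLeftOf_cons_cons, isStrictlyLeftOf_nil]
    | some j =>
      rw [ins_cons_of_findIdx?_eq_some hfind]
      cases hfind' : (r.set j a).findIdx? (a' ≤ ·) with
      | none =>
        obtain ⟨hj, -⟩ := List.findIdx?_eq_some_iff_getElem.mp hfind
        simp [ins_cons_of_findIdx?_eq_none hfind', isStrictlyLeftOf_cons_cons,
          isStrictlyLeftOf_nil, hj]
      | some j' =>
        obtain ⟨hj', hbump⟩ := lt_of_findIdx?_set_eq_some (hR r List.mem_cons_self) hfind h
          hfind'
        obtain ⟨hleft, hlen⟩ := ih (fun q hq => hR q (List.mem_cons_of_mem r hq)) hbump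
        rw [ins_cons_of_findIdx?_eq_some hfind', isStrictlyLeftOf_cons_cons]
        exact ⟨⟨hj', hleft⟩, Nat.succ_le_succ hlen⟩

theorem bumping_routes_general (R : List (List ℕ)) (hR : IsSSYT R)
    (a a' : ℕ) :
    (a' ≤ a →
      (∀ i, i < (ins R a).2.length →
        i < (ins (ins R a).1 a').2.length ∧
          ((ins (ins R a).1 a').2.getD i 0 ≤ (ins R a).2.getD i 0)) ∧
      (ins R a).2.length < (ins (ins R a).1 a').2.length) ∧
    (a < a' →
      (∀ i, i < (ins (ins R a).1 a').2.length →
        i < (ins R a).2.length ∧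
          ((ins R a).2.getD i 0 < (ins (ins R a).1 a').2.getD i 0)) ∧
      (ins (ins R a).1 a').2.length ≤ (ins R a).2.length) := by
  have hrows : ∀ r ∈ R, r.Pairwise (· < ·) := fun r hr =>
    List.isChain_iff_pairwise.mp (hR.1 r hr)
  exact ⟨isWeaklyLeftOf_ins_ins_of_le hrows, isStrictlyLeftOf_ins_ins_of_lt hrows⟩

/-- Row bumping lemma: insert `a` into `R` (route `ρ`), then `a'` into the
result (route `ρ'`).  If `a ≥ a'` then `ρ'` is weakly left of `ρ` and the new
box of `ρ'` is strictly below that of `ρ`; if `a < a'` then `ρ` is strictly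
left of `ρ'` and the new box of `ρ` is weakly below that of `ρ'`. -/
theorem bumping_routes (R : List (List ℕ)) (hR : IsSSYT R)
    (hpos : ∀ r ∈ R, ∀ x ∈ r, 0 < x) (a a' : ℕ) (ha : 0 < a) (ha' : 0 < a') :
    (a' ≤ a →
      (∀ i, i < (ins R a).2.length →
        i < (ins (ins R a).1 a').2.length ∧
          ((ins (ins R a).1 a').2.getD i 0 ≤ (ins R a).2.getD i 0)) ∧
      (ins R a).2.length < (ins (ins R a).1 a').2.length) ∧
    (a < a' →
      (∀ i, i < (ins (ins R a).1 a').2.length →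
        i < (ins R a).2.length ∧
          ((ins R a).2.getD i 0 < (ins (ins R a).1 a').2.getD i 0)) ∧
      (ins (ins R a).1 a').2.length ≤ (ins R a).2.length) :=
  bumping_routes_general R hR a a'
end

section
/- Let (P,Q) be a negative semistandard notched bitableau and let b be the minimum of all entries of Q. Then P is semistandard on b. -/
/-!
Every entry of `Q` is at least `b`, so the entries below `b` of the sorted row `P_i ⊎ Q_{i+1}`
form an initial segment of it, and they are exactly the entries of `P_i` below `b`; likewise for
`P_{i+1} ⊎ Q_i`. Restricted to these initial segments, the termwise inequality
`P_i ⊎ Q_{i+1} ≤ P_{i+1} ⊎ Q_i` says that the part of row `i + 1` of `P` below `b` is no longer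
than that of row `i` and weakly larger column by column: the semistandard condition.
-/

def RowStrictT (P : List (List ℕ)) : Prop :=
  ∀ r ∈ P, List.Chain' (· < ·) r

def PosEntries (P : List (List ℕ)) : Prop := ∀ r ∈ P, ∀ x ∈ r, 0 < x

def below (P : List (List ℕ)) (b : ℕ) : List (List ℕ) :=
  P.map (List.filter (fun x => decide (x < b)))

def SemistandardOn (P : List (List ℕ)) (b : ℕ) : Prop := IsSSYT (below P b)

/-- `(P,Q)` have the same (notched) shape. -/
def SameShape (P Q : List (List ℕ)) : Prop :=
  P.length = Q.length ∧ ∀ i, (P.getD i []).length = (Q.getD i []).length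

/-- Semistandard notched bitableau: `P_i − Q_i ≤ P_{i+1} − Q_{i+1}` for each
`i`, i.e. `P_i ⊎ Q_{i+1} ≤ P_{i+1} ⊎ Q_i` in the termwise order. -/
noncomputable def SemistandardNB (P Q : List (List ℕ)) : Prop :=
  ∀ i, i + 1 < P.length →
    twLE ((P.getD i [] : Multiset ℕ) + (Q.getD (i + 1) [] : Multiset ℕ))
      ((P.getD (i + 1) [] : Multiset ℕ) + (Q.getD i [] : Multiset ℕ))

/-- Negative bitableau: each entry of `P_i` is strictly less than the
same-position entry of `Q_i`. -/
def NegativeNB (P Q : List (List ℕ)) : Prop :=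
  ∀ i, i < P.length → ∀ j, j < (P.getD i []).length →
    (P.getD i []).getD j 0 < (Q.getD i []).getD j 0

namespace List

variable {α : Type*} [LinearOrder α]

theorem Pairwise.filter_lt_prefix (b : α) :
    ∀ {l : List α}, l.Pairwise (· ≤ ·) → l.filter (· < b) <+: l
  | [], _ => nil_prefix
  | a :: t, h => by
    rw [pairwise_cons] at h
    by_cases hab : a < b
    · simpa [filter_cons, hab] using h.2.filter_lt_prefix b
    · have htail : t.filter (· < b) = [] := filter_eq_nil_iff.2 fun x hx => by
        simpa using (not_lt.1 hab).trans (h.1 x hx)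
      simp [hab, htail]

theorem Pairwise.lt_length_filter_lt {l : List α} (h : l.Pairwise (· ≤ ·)) {b : α} {j : ℕ}
    (hj : j < l.length) (hjb : l[j] < b) : j < (l.filter (· < b)).length := by
  have htake : ∀ x ∈ l.take (j + 1), x < b := fun x hx => by
    obtain ⟨i, hi, rfl⟩ := getElem_of_mem hx
    rw [length_take] at hi
    rw [getElem_take]
    exact (h.rel_get_of_le (a := ⟨i, by omega⟩) (b := ⟨j, hj⟩) (by simp; omega)).trans_lt hjb
  have := ((take_sublist (j + 1) l).filter (· < b)).length_le
  rw [filter_eq_self.2 (by simpa using htake), length_take] at this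
  omega

theorem Pairwise.filter_lt_sort_add {l m : List α} (hl : l.Pairwise (· ≤ ·)) {b : α}
    (hm : ∀ x ∈ m, b ≤ x) :
    ((l + m : Multiset α).sort (· ≤ ·)).filter (· < b) = l.filter (· < b) := by
  refine Perm.eq_of_pairwise' ((Multiset.pairwise_sort _ _).filter _) (hl.filter _) ?_
  rw [← Multiset.coe_eq_coe, ← Multiset.filter_coe, Multiset.sort_eq, Multiset.filter_add,
    Multiset.filter_coe, Multiset.filter_coe, (filter_eq_nil_iff (l := m)).2 (by simpa using hm)]
  simp

end List

theorem List.forall_getD {α : Type*} {p : α → Prop} {l : List α} {d : α} (hd : p d)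
    (hl : ∀ x ∈ l, p x) (n : ℕ) : p (l.getD n d) := by
  rw [List.getD_eq_getElem?_getD]
  cases h : l[n]? with
  | none => exact hd
  | some x => exact hl x (List.mem_of_getElem? h)

def FitsBelow (u v : List ℕ) : Prop :=
  v.length ≤ u.length ∧ ∀ j < v.length, u.getD j 0 ≤ v.getD j 0

theorem fitsBelow_filter_lt_of_termwise {l₁ l₂ : List ℕ} (h₁ : l₁.Pairwise (· ≤ ·))
    (h₂ : l₂.Pairwise (· ≤ ·)) (hlen : l₁.length = l₂.length)
    (hle : ∀ j, l₁.getD j 0 ≤ l₂.getD j 0) (b : ℕ) :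
    FitsBelow (l₁.filter (· < b)) (l₂.filter (· < b)) := by
  have key : ∀ j (hj : j < (l₂.filter (· < b)).length),
      ∃ hj' : j < (l₁.filter (· < b)).length,
        (l₁.filter (· < b))[j] ≤ (l₂.filter (· < b))[j] := by
    intro j hj
    have hpre₂ := h₂.filter_lt_prefix b
    have hpre₁ := h₁.filter_lt_prefix b
    have hj₂ : j < l₂.length := hj.trans_le hpre₂.length_le
    have hj₁ : j < l₁.length := hlen ▸ hj₂
    have hlt : l₂[j] < b := by
      simpa [hpre₂.getElem hj] using List.of_mem_filter (List.getElem_mem hj)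
    have hjle : l₁[j] ≤ l₂[j] := by
      simpa only [List.getD_eq_getElem _ _ hj₁, List.getD_eq_getElem _ _ hj₂] using hle j
    have hj' := h₁.lt_length_filter_lt hj₁ (hjle.trans_lt hlt)
    exact ⟨hj', by rwa [hpre₁.getElem hj', hpre₂.getElem hj]⟩
  refine ⟨?_, fun j hj => ?_⟩
  · by_contra! hlt
    exact (key _ hlt).1.false
  · obtain ⟨hj', hjle⟩ := key j hj
    rwa [List.getD_eq_getElem _ _ hj, List.getD_eq_getElem _ _ hj']

theorem fitsBelow_filter_lt_of_twLE {l₁ l₂ m₁ m₂ : List ℕ} (h₁ : l₁.Pairwise (· ≤ ·))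
    (h₂ : l₂.Pairwise (· ≤ ·)) {b : ℕ} (hm₁ : ∀ x ∈ m₁, b ≤ x) (hm₂ : ∀ x ∈ m₂, b ≤ x)
    (htw : twLE (l₁ + m₁) (l₂ + m₂)) : FitsBelow (l₁.filter (· < b)) (l₂.filter (· < b)) := by
  rw [← h₁.filter_lt_sort_add hm₁, ← h₂.filter_lt_sort_add hm₂]
  exact fitsBelow_filter_lt_of_termwise (Multiset.pairwise_sort _ _) (Multiset.pairwise_sort _ _)
    (by simp only [Multiset.length_sort, htw.1]) htw.2 b

theorem isSSYT_of_fitsBelow {T : List (List ℕ)} (hrows : ∀ r ∈ T, r.IsChain (· < ·))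
    (hfit : ∀ i, i + 1 < T.length → FitsBelow (T.getD i []) (T.getD (i + 1) [])) : IsSSYT T := by
  have hfit' : ∀ i, FitsBelow (T.getD i []) (T.getD (i + 1) []) := by
    intro i
    by_cases hi : i + 1 < T.length
    · exact hfit i hi
    · rw [FitsBelow, List.getD_eq_default _ _ (not_lt.1 hi)]
      simp
  exact ⟨hrows, fun i => (hfit' i).1, fun i j => (hfit' i).2 j⟩

theorem below_getD (P : List (List ℕ)) (b i : ℕ) :
    (below P b).getD i [] = (P.getD i []).filter (· < b) :=
  List.getD_map (l := P) (d := []) (n := i) (List.filter (· < b))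

theorem semistandardOn_min_of_negative_ssnb_general (P Q : List (List ℕ))
    (hrsP : RowStrictT P) (hss : SemistandardNB P Q)
    (b : ℕ) (hbmin : ∀ r ∈ Q, ∀ x ∈ r, b ≤ x) :
    SemistandardOn P b := by
  have hsorted : ∀ i, (P.getD i []).Pairwise (· ≤ ·) :=
    List.forall_getD .nil fun r hr => (List.isChain_iff_pairwise.1 (hrsP r hr)).imp le_of_lt
  have hQ : ∀ i, ∀ x ∈ Q.getD i [], b ≤ x :=
    List.forall_getD (by simp) hbmin
  refine isSSYT_of_fitsBelow (fun r hr => ?_) fun i hi => ?_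
  · obtain ⟨s, hs, rfl⟩ := List.mem_map.1 hr
    exact (hrsP s hs).sublist List.filter_sublist
  · rw [below_getD, below_getD]
    exact fitsBelow_filter_lt_of_twLE (hsorted i) (hsorted (i + 1)) (hQ (i + 1)) (hQ i)
      (hss i (by simpa [below] using hi))

/-- If `(P,Q)` is a negative semistandard notched bitableau and `b` is the
minimum of all entries of `Q`, then `P` is semistandard on `b`. -/
theorem semistandardOn_min_of_negative_ssnb (P Q : List (List ℕ))
    (hshape : SameShape P Q) (hrsP : RowStrictT P) (hrsQ : RowStrictT Q)
    (hposP : PosEntries P) (hposQ : PosEntries Q)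
    (hss : SemistandardNB P Q) (hneg : NegativeNB P Q)
    (b : ℕ) (hbmem : ∃ r ∈ Q, b ∈ r) (hbmin : ∀ r ∈ Q, ∀ x ∈ r, b ≤ x) :
    SemistandardOn P b :=
  semistandardOn_min_of_negative_ssnb_general P Q hrsP hss b hbmin
end

section
/- If U is a negative multiset on ℕ², then BRSK(U) is a negative semistandard notched bitableau. -/
/-- Bounded insertion `P ←_b a`. -/
def bins (P : List (List ℕ)) (b a : ℕ) : List (List ℕ) × List ℕ :=
  let T := ins (below P b) a
  ((List.range T.1.length).map
      (fun i => T.1.getD i [] ++ (P.getD i []).filter (fun x => decide (b ≤ x))),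
    T.2)

/-- One step of the bounded RSK: `(P,Q) ←_b a`: boundedly insert `a` into `P`
with bound `b`, and prepend `b` to the row of `Q` containing the new box. -/
def BRSKstep (PQ : List (List ℕ) × List (List ℕ)) (ab : ℕ × ℕ) :
    List (List ℕ) × List (List ℕ) :=
  let r := bins PQ.1 ab.2 ab.1
  let k := r.2.length - 1
  (r.1, if k < PQ.2.length then PQ.2.set k (ab.2 :: PQ.2.getD k [])
        else PQ.2 ++ [[ab.2]])

/-- The bounded RSK of a list of pairs (to be taken in lexicographic order). -/
def BRSK (l : List (ℕ × ℕ)) : List (List ℕ) × List (List ℕ) :=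
  l.foldl BRSKstep ([], [])

/-- Lexicographic order of the paper: `b`'s weakly decreasing, and for equal
`b`'s the `a`'s weakly decreasing. -/
def LexSorted (l : List (ℕ × ℕ)) : Prop :=
  l.Pairwise (fun x y => y.2 < x.2 ∨ (x.2 = y.2 ∧ y.1 ≤ x.1))

/-- Negative semistandard notched bitableau (with positive entries and
nonempty rows). -/
noncomputable def IsNegSSNB (PQ : List (List ℕ) × List (List ℕ)) : Prop :=
  SameShape PQ.1 PQ.2 ∧ RowStrictT PQ.1 ∧ RowStrictT PQ.2 ∧
    PosEntries PQ.1 ∧ PosEntries PQ.2 ∧ (∀ r ∈ PQ.1, r ≠ []) ∧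
    SemistandardNB PQ.1 PQ.2 ∧ NegativeNB PQ.1 PQ.2

/-!
Bounded insertion of `a` with bound `b` is Schensted insertion into the entries of `P` below `b`:
it inserts values `a = v₀ ≤ v₁ ≤ ⋯ ≤ vₖ < b` into rows `0, …, k`, each `vₜ₊₁` being the least
entry of row `t` not below `vₜ`, which `vₜ` replaces, and `vₖ` is placed after the entries of
row `k` below `b`; then `b` is prepended to row `k` of `Q`.

Semistandardness is carried in counting form. Let `cᵢ(x)` be the number of entries below `x` in
row `i` of `P` minus that in row `i` of `Q`; for sorted rows, `cᵢ₊₁ ≤ cᵢ` for all `x` is the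
termwise order of the notched bitableau. An insertion adds to `cₜ` the indicator of `(vₜ, vₜ₊₁]`
for `t < k` and of `(vₖ, b]` for `t = k`, so only where row `i + 1` gains and row `i` does not
is there anything to prove, and there the entry `vᵢ₊₁` of row `i` provides the room.

Since the pairs come with `b` weakly decreasing, `b` is at most every entry of `Q`; for equal `b`
the `a` weakly decrease, so by the row bumping lemma the new box lies strictly below every box of
`Q` already labelled `b`, and the rows of `Q` stay strictly increasing. Entries of `P` only
decrease, except in row `k`, whose entries up to the new box are below `b`: this keeps `P`
strictly below `Q`.
-/

namespace BRSK

open List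

section Lists

lemma getD_mem {α : Type*} {l : List α} {i : ℕ} {d : α} (h : i < l.length) : l.getD i d ∈ l := by
  rw [getD_eq_getElem _ _ h]
  exact getElem_mem h

lemma forall_getD_iff {α : Type*} {L : List (List α)} {p : List α → Prop} (hp : p []) :
    (∀ i, p (L.getD i [])) ↔ ∀ r ∈ L, p r := by
  refine ⟨fun h r hr => ?_, fun h i => ?_⟩
  · obtain ⟨i, hi, rfl⟩ := getElem_of_mem hr
    rw [← getD_eq_getElem _ [] hi]
    exact h i
  · rcases Nat.lt_or_ge i L.length with hi | hi
    · rw [getD_eq_getElem _ _ hi]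
      exact h _ (getElem_mem hi)
    · rwa [getD_eq_default _ _ hi]

lemma getD_set_le {r : List ℕ} {j v : ℕ} (hj : j < r.length) (hv : v ≤ r[j]) (m : ℕ) :
    (r.set j v).getD m 0 ≤ r.getD m 0 := by
  simp only [getD_eq_getElem?_getD, getElem?_set]
  split_ifs with h
  · subst h
    simp [getElem?_eq_getElem hj, hv]
  · exact le_rfl

lemma getD_append_cons_lt_getD_cons {B U s : List ℕ} {y c : ℕ} (hB : ∀ z ∈ B, z < c)
    (hy : y < c) (hs : ∀ z ∈ s, c ≤ z) (hlen : B.length ≤ s.length)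
    (hneg : ∀ j < (B ++ U).length, (B ++ U).getD j 0 < s.getD j 0) {j : ℕ}
    (hj : j < (B ++ y :: U).length) : (B ++ y :: U).getD j 0 < (c :: s).getD j 0 := by
  rcases Nat.lt_or_ge B.length j with hBj | hBj
  · obtain ⟨m, rfl⟩ : ∃ m, j = m + 1 := ⟨j - 1, by omega⟩
    have := hneg m (by simp at hj ⊢; omega)
    rw [getD_append_right _ _ _ _ (by omega)] at this
    rwa [getD_cons_succ, getD_append_right _ _ _ _ (by omega),
      show m + 1 - B.length = m - B.length + 1 by omega, getD_cons_succ]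
  · have hlt : (B ++ y :: U).getD j 0 < c := by
      rcases Nat.lt_or_ge j B.length with h | h
      · rw [getD_append _ _ _ _ h]
        exact hB _ (getD_mem h)
      · rwa [getD_append_right _ _ _ _ h, show j - B.length = 0 by omega]
    cases j with
    | zero => exact hlt
    | succ m => exact lt_of_lt_of_le hlt (hs _ (getD_mem (by omega)))

lemma pairwise_lt_set {r : List ℕ} (hr : r.Pairwise (· < ·)) {j v : ℕ} (hj : j < r.length)
    (hlt : ∀ i (hi : i < j), r[i] < v) (hle : v ≤ r[j]) : (r.set j v).Pairwise (· < ·) := by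
  rw [pairwise_iff_getElem] at hr ⊢
  intro i₁ i₂ h₁ h₂ h₁₂
  simp only [length_set] at h₁ h₂
  simp only [getElem_set]
  split_ifs with e₁ e₂ e₂
  · omega
  · subst e₁; exact lt_of_le_of_lt hle (hr _ _ _ _ h₁₂)
  · subst e₂; exact hlt i₁ h₁₂
  · exact hr _ _ _ _ h₁₂

lemma filter_lt_append_filter_le {r : List ℕ} (hr : r.Pairwise (· ≤ ·)) (b : ℕ) :
    r.filter (fun x => decide (x < b)) ++ r.filter (fun x => decide (b ≤ x)) = r := by
  induction r with
  | nil => rfl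
  | cons y r ih =>
    rw [pairwise_cons] at hr
    by_cases hy : y < b
    · simp [hy, ih hr.2]
    · have h₁ : r.filter (fun x => decide (x < b)) = [] :=
        filter_eq_nil_iff.2 fun x hx => by have := hr.1 x hx; simp; omega
      have h₂ : r.filter (fun x => decide (b ≤ x)) = r :=
        filter_eq_self.2 fun x hx => by have := hr.1 x hx; simp; omega
      simp [hy, h₁, h₂, le_of_not_gt hy]

end Lists

section Counting

def countLT (r : List ℕ) (x : ℕ) : ℕ := r.countP (· < x)

lemma countLT_append (r s : List ℕ) (x : ℕ) : countLT (r ++ s) x = countLT r x + countLT s x :=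
  countP_append

lemma countLT_cons (y : ℕ) (r : List ℕ) (x : ℕ) :
    countLT (y :: r) x = countLT r x + if y < x then 1 else 0 := by
  simp [countLT, countP_cons]

lemma countLT_set {r : List ℕ} {j : ℕ} (hj : j < r.length) (v x : ℕ) :
    countLT (r.set j v) x + (if r[j] < x then 1 else 0) = countLT r x + if v < x then 1 else 0 := by
  have hset := countP_set (p := fun y => decide (y < x)) (a := v) hj
  have hle : (if r[j] < x then 1 else 0) ≤ countLT r x := by
    split_ifs with h
    · exact countP_pos_iff.2 ⟨r[j], getElem_mem hj, by simpa using h⟩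
    · exact Nat.zero_le _
  simp only [decide_eq_true_eq] at hset
  unfold countLT at hle ⊢
  omega

lemma countLT_eq_add_countP (r : List ℕ) {x x' : ℕ} (hx : x ≤ x') :
    countLT r x' = countLT r x + r.countP (fun y => x ≤ y ∧ y < x') := by
  induction r with
  | nil => rfl
  | cons y r ih =>
    simp only [countLT, countP_cons] at ih ⊢
    rw [ih]
    by_cases h1 : y < x <;> by_cases h2 : y < x' <;> simp only [h1, h2, decide_true,
      decide_false, if_true, if_false, Bool.false_eq_true] <;> grind

lemma countLT_lt_countLT {r : List ℕ} {x x' y : ℕ} (hy : y ∈ r) (hxy : x ≤ y) (hyx' : y < x') :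
    countLT r x < countLT r x' := by
  rw [countLT_eq_add_countP r (by omega : x ≤ x')]
  have : 0 < r.countP (fun y => x ≤ y ∧ y < x') := countP_pos_iff.2 ⟨y, hy, by simp [hxy, hyx']⟩
  omega

lemma countLT_eq_countLT {r : List ℕ} {x x' : ℕ} (hx : x ≤ x') (h : ∀ y ∈ r, y < x ∨ x' ≤ y) :
    countLT r x' = countLT r x := by
  rw [countLT_eq_add_countP r hx, add_eq_left, countP_eq_zero]
  intro y hy
  have := h y hy
  simp only [decide_eq_true_eq, not_and, not_lt]
  omega

lemma countLT_eq_zero {r : List ℕ} {x : ℕ} (h : ∀ y ∈ r, x ≤ y) : countLT r x = 0 :=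
  countP_eq_zero.2 fun y hy => by simpa using h y hy

lemma countLT_eq_length {r : List ℕ} {x : ℕ} (h : ∀ y ∈ r, y < x) : countLT r x = r.length :=
  countP_eq_length.2 fun y hy => by simpa using h y hy

lemma countLT_getElem_le {u : List ℕ} (hu : u.Pairwise (· ≤ ·)) {i : ℕ} (hi : i < u.length) :
    countLT u u[i] ≤ i := by
  have hdrop : countLT (u.drop i) u[i] = 0 := by
    refine countLT_eq_zero fun y hy => ?_
    obtain ⟨m, hm, rfl⟩ := getElem_of_mem hy
    rw [getElem_drop]
    exact hu.sortedLE.getElem_le_getElem_of_le (by omega)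
  calc countLT u u[i] = countLT (u.take i) u[i] + countLT (u.drop i) u[i] := by
        rw [← countLT_append, take_append_drop]
    _ ≤ i := by rw [hdrop]; exact countP_le_length.trans (length_take_le i u)

lemma lt_countLT {u : List ℕ} (hu : u.Pairwise (· ≤ ·)) {i x : ℕ} (hi : i < u.length)
    (hx : u[i] < x) : i < countLT u x := by
  have htake : countLT (u.take (i + 1)) x = i + 1 := by
    rw [countLT_eq_length, length_take_of_le hi]
    intro y hy
    obtain ⟨m, hm, rfl⟩ := getElem_of_mem hy
    rw [getElem_take]
    exact lt_of_le_of_lt (hu.sortedLE.getElem_le_getElem_of_le (by simp at hm; omega)) hx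
  rw [← take_append_drop (i + 1) u, countLT_append, htake]
  omega

lemma getD_le_getD_of_countLT_le {u w : List ℕ} (hu : u.Pairwise (· ≤ ·))
    (hw : w.Pairwise (· ≤ ·)) (hlen : u.length = w.length)
    (h : ∀ x, countLT w x ≤ countLT u x) (i : ℕ) : u.getD i 0 ≤ w.getD i 0 := by
  rcases Nat.lt_or_ge i u.length with hi | hi
  · rw [getD_eq_getElem _ _ hi, getD_eq_getElem _ _ (hlen ▸ hi)]
    by_contra! hlt
    have := h u[i]
    have := countLT_getElem_le hu hi
    have := lt_countLT hw (hlen ▸ hi) hlt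
    omega
  · rw [getD_eq_default _ _ hi, getD_eq_default _ _ (hlen ▸ hi)]

lemma twLE_of_countLT_le {A B : Multiset ℕ} (hcard : Multiset.card A = Multiset.card B)
    (h : ∀ x, countLT (B.sort (· ≤ ·)) x ≤ countLT (A.sort (· ≤ ·)) x) : twLE A B :=
  ⟨hcard, getD_le_getD_of_countLT_le (Multiset.pairwise_sort A _) (Multiset.pairwise_sort B _)
    (by simp [hcard]) h⟩

lemma countLT_sort_coe_add (r s : List ℕ) (x : ℕ) :
    countLT (((r : Multiset ℕ) + s).sort (· ≤ ·)) x = countLT r x + countLT s x := by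
  have hperm : (((r : Multiset ℕ) + s).sort (· ≤ ·)).Perm (r ++ s) := by
    rw [← Multiset.coe_eq_coe, Multiset.sort_eq, Multiset.coe_add]
  rw [countLT, hperm.countP_eq, ← countLT, countLT_append]

end Counting

section Insertion

lemma findIdx?_le_eq_some {r : List ℕ} {a j : ℕ}
    (h : r.findIdx? (fun x => decide (a ≤ x)) = some j) :
    ∃ hj : j < r.length, a ≤ r[j] ∧ ∀ i (hi : i < j), r[i] < a := by
  obtain ⟨hj, hp, hmin⟩ := findIdx?_eq_some_iff_getElem.1 h
  exact ⟨hj, by simpa using hp, fun i hi => by simpa using hmin i hi⟩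

lemma findIdx?_le_eq_none {r : List ℕ} {a : ℕ} (h : r.findIdx? (fun x => decide (a ≤ x)) = none) :
    ∀ x ∈ r, x < a := fun x hx => by simpa using findIdx?_eq_none_iff.1 h x hx

/-- The values inserted into the successive rows along the bumping route of `ins T a`. -/
def insVals : List (List ℕ) → ℕ → List ℕ
  | [], a => [a]
  | r :: rs, a =>
    match r.findIdx? (fun x => decide (a ≤ x)) with
    | none => [a]
    | some j => a :: insVals rs (r.getD j 0)

@[simp] lemma insVals_nil (a : ℕ) : insVals [] a = [a] := rfl

@[simp] lemma ins_nil (a : ℕ) : ins [] a = ([[a]], [0]) := rfl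

section Cons

variable {r : List ℕ} {rs : List (List ℕ)} {a : ℕ}

lemma insVals_cons_of_none (h : r.findIdx? (fun x => decide (a ≤ x)) = none) :
    insVals (r :: rs) a = [a] := by
  simp [insVals, h]

lemma insVals_cons_of_some {j : ℕ} (h : r.findIdx? (fun x => decide (a ≤ x)) = some j) :
    insVals (r :: rs) a = a :: insVals rs (r.getD j 0) := by
  simp [insVals, h]

lemma ins_cons_of_none (h : r.findIdx? (fun x => decide (a ≤ x)) = none) :
    ins (r :: rs) a = ((r ++ [a]) :: rs, [r.length]) := by
  simp [ins, h]

lemma ins_cons_of_some {j : ℕ} (h : r.findIdx? (fun x => decide (a ≤ x)) = some j) :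
    ins (r :: rs) a = (r.set j a :: (ins rs (r.getD j 0)).1, j :: (ins rs (r.getD j 0)).2) := by
  simp [ins, h]

end Cons

lemma insVals_ne_nil (T : List (List ℕ)) (a : ℕ) : insVals T a ≠ [] := by
  cases T with
  | nil => simp
  | cons r rs =>
    rcases hf : r.findIdx? (fun x => decide (a ≤ x)) with _ | j
    · simp [insVals_cons_of_none hf]
    · simp [insVals_cons_of_some hf]

lemma length_insVals_pos (T : List (List ℕ)) (a : ℕ) : 0 < (insVals T a).length :=
  length_pos_iff.2 (insVals_ne_nil T a)

lemma insVals_getD_zero (T : List (List ℕ)) (a : ℕ) : (insVals T a).getD 0 0 = a := by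
  cases T with
  | nil => simp
  | cons r rs =>
    rcases hf : r.findIdx? (fun x => decide (a ≤ x)) with _ | j
    · simp [insVals_cons_of_none hf]
    · simp [insVals_cons_of_some hf]

lemma length_ins_snd (T : List (List ℕ)) (a : ℕ) :
    (ins T a).2.length = (insVals T a).length := by
  induction T generalizing a with
  | nil => simp
  | cons r rs ih =>
    rcases hf : r.findIdx? (fun x => decide (a ≤ x)) with _ | j
    · simp [ins_cons_of_none hf, insVals_cons_of_none hf]
    · simp [ins_cons_of_some hf, insVals_cons_of_some hf, ih]

lemma length_insVals_le (T : List (List ℕ)) (a : ℕ) : (insVals T a).length ≤ T.length + 1 := by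
  induction T generalizing a with
  | nil => simp
  | cons r rs ih =>
    rcases hf : r.findIdx? (fun x => decide (a ≤ x)) with _ | j
    · simp [insVals_cons_of_none hf]
    · simpa [insVals_cons_of_some hf] using ih _

lemma length_ins_fst (T : List (List ℕ)) (a : ℕ) :
    (ins T a).1.length = max T.length (insVals T a).length := by
  induction T generalizing a with
  | nil => simp
  | cons r rs ih =>
    rcases hf : r.findIdx? (fun x => decide (a ≤ x)) with _ | j
    · simp [ins_cons_of_none hf, insVals_cons_of_none hf]
    · simp only [ins_cons_of_some hf, insVals_cons_of_some hf, length_cons, ih]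
      omega

lemma ins_getD_of_succ_lt (T : List (List ℕ)) (a : ℕ) {t : ℕ}
    (ht : t + 1 < (insVals T a).length) :
    ∃ j, ∃ hj : j < (T.getD t []).length, (T.getD t [])[j] = (insVals T a).getD (t + 1) 0 ∧
      (insVals T a).getD t 0 ≤ (insVals T a).getD (t + 1) 0 ∧
      (ins T a).1.getD t [] = (T.getD t []).set j ((insVals T a).getD t 0) := by
  induction T generalizing a t with
  | nil => simp at ht
  | cons r rs ih =>
    rcases hf : r.findIdx? (fun x => decide (a ≤ x)) with _ | j
    · simp [insVals_cons_of_none hf] at ht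
    · rw [insVals_cons_of_some hf] at ht ⊢
      rw [ins_cons_of_some hf]
      obtain ⟨hj, hja, -⟩ := findIdx?_le_eq_some hf
      cases t with
      | zero =>
        have hrj : r.getD j 0 = r[j] := getD_eq_getElem _ _ hj
        refine ⟨j, hj, ?_, ?_, rfl⟩ <;>
          simp only [getD_cons_zero, getD_cons_succ, insVals_getD_zero, hrj, hja]
      | succ t => simpa using ih _ (by simpa using ht)

lemma insVals_getD_le_getD_succ (T : List (List ℕ)) (a : ℕ) {t : ℕ}
    (ht : t + 1 < (insVals T a).length) : (insVals T a).getD t 0 ≤ (insVals T a).getD (t + 1) 0 :=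
  let ⟨_, _, _, hle, _⟩ := ins_getD_of_succ_lt T a ht
  hle

lemma ins_getD_of_succ_eq (T : List (List ℕ)) (a : ℕ) {t : ℕ}
    (ht : t + 1 = (insVals T a).length) :
    (ins T a).1.getD t [] = T.getD t [] ++ [(insVals T a).getD t 0] := by
  induction T generalizing a t with
  | nil => obtain rfl : t = 0 := by simpa using ht
           rfl
  | cons r rs ih =>
    rcases hf : r.findIdx? (fun x => decide (a ≤ x)) with _ | j
    · rw [insVals_cons_of_none hf] at ht ⊢
      obtain rfl : t = 0 := by simpa using ht
      simp [ins_cons_of_none hf]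
    · rw [insVals_cons_of_some hf] at ht ⊢
      rw [ins_cons_of_some hf]
      cases t with
      | zero => exact absurd ht (by simpa using insVals_ne_nil rs _)
      | succ t => simpa using ih _ (by simpa using ht)

lemma ins_getD_of_le (T : List (List ℕ)) (a : ℕ) {t : ℕ} (ht : (insVals T a).length ≤ t) :
    (ins T a).1.getD t [] = T.getD t [] := by
  induction T generalizing a t with
  | nil => obtain ⟨t, rfl⟩ : ∃ s, t = s + 1 := ⟨t - 1, by simp at ht; omega⟩
           simp
  | cons r rs ih =>
    rcases hf : r.findIdx? (fun x => decide (a ≤ x)) with _ | j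
    · rw [insVals_cons_of_none hf] at ht
      obtain ⟨t, rfl⟩ : ∃ s, t = s + 1 := ⟨t - 1, by simp at ht; omega⟩
      simp [ins_cons_of_none hf]
    · rw [insVals_cons_of_some hf] at ht
      rw [ins_cons_of_some hf]
      obtain ⟨t, rfl⟩ : ∃ s, t = s + 1 := ⟨t - 1, by simp at ht; omega⟩
      simpa using ih _ (by simpa using ht)

lemma insVals_gap {T : List (List ℕ)} (hT : ∀ r ∈ T, r.Pairwise (· < ·)) (a : ℕ) {t : ℕ}
    (ht : t < (insVals T a).length) {y : ℕ} (hy : y ∈ T.getD t []) :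
    y < (insVals T a).getD t 0 ∨
      t + 1 < (insVals T a).length ∧ (insVals T a).getD (t + 1) 0 ≤ y := by
  induction T generalizing a t with
  | nil => simp at hy
  | cons r rs ih =>
    rcases hf : r.findIdx? (fun x => decide (a ≤ x)) with _ | j
    · rw [insVals_cons_of_none hf] at ht ⊢
      obtain rfl : t = 0 := by simpa using ht
      simpa using findIdx?_le_eq_none hf y hy
    · rw [insVals_cons_of_some hf] at ht ⊢
      cases t with
      | zero =>
        obtain ⟨hj, -, hmin⟩ := findIdx?_le_eq_some hf
        obtain ⟨m, hm, rfl⟩ := getElem_of_mem (by simpa using hy)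
        rcases Nat.lt_or_ge m j with hmj | hmj
        · exact Or.inl (by simpa using hmin m hmj)
        · refine Or.inr ⟨by simpa using length_insVals_pos rs _, ?_⟩
          simp only [getD_cons_succ, insVals_getD_zero, getD_eq_getElem _ _ hj]
          exact ((hT r mem_cons_self).imp le_of_lt).sortedLE.getElem_le_getElem_of_le hmj
      | succ t =>
        simpa using ih (fun r hr => hT r (mem_cons_of_mem _ hr)) _ (by simpa using ht)
          (by simpa using hy)

lemma forall_mem_insVals {p : ℕ → Prop} {T : List (List ℕ)} {a : ℕ} (ha : p a)
    (hT : ∀ r ∈ T, ∀ x ∈ r, p x) : ∀ y ∈ insVals T a, p y := by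
  induction T generalizing a with
  | nil => simpa using ha
  | cons r rs ih =>
    rcases hf : r.findIdx? (fun x => decide (a ≤ x)) with _ | j
    · simpa [insVals_cons_of_none hf] using ha
    · obtain ⟨hj, -⟩ := findIdx?_le_eq_some hf
      rw [insVals_cons_of_some hf, forall_mem_cons]
      refine ⟨ha, ih ?_ fun r hr => hT r (mem_cons_of_mem _ hr)⟩
      rw [getD_eq_getElem _ _ hj]
      exact hT r mem_cons_self _ (getElem_mem hj)

lemma forall_mem_ins {p : ℕ → Prop} {T : List (List ℕ)} {a : ℕ} (ha : p a)
    (hT : ∀ r ∈ T, ∀ x ∈ r, p x) : ∀ r ∈ (ins T a).1, ∀ x ∈ r, p x := by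
  induction T generalizing a with
  | nil => simpa using ha
  | cons r rs ih =>
    have hr := hT r mem_cons_self
    have hrs := fun r hr => hT r (mem_cons_of_mem _ hr)
    rcases hf : r.findIdx? (fun x => decide (a ≤ x)) with _ | j
    · simp only [ins_cons_of_none hf, forall_mem_cons, mem_append, mem_singleton]
      exact ⟨fun x hx => hx.elim (hr x) (· ▸ ha), hrs⟩
    · obtain ⟨hj, -⟩ := findIdx?_le_eq_some hf
      simp only [ins_cons_of_some hf, forall_mem_cons]
      refine ⟨fun x hx => (mem_or_eq_of_mem_set hx).elim (hr x) (· ▸ ha), ih ?_ hrs⟩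
      rw [getD_eq_getElem _ _ hj]
      exact hr _ (getElem_mem hj)

lemma pairwise_ins {T : List (List ℕ)} (hT : ∀ r ∈ T, r.Pairwise (· < ·)) (a : ℕ) :
    ∀ r ∈ (ins T a).1, r.Pairwise (· < ·) := by
  induction T generalizing a with
  | nil => simp
  | cons r rs ih =>
    have hr := hT r mem_cons_self
    have hrs := fun r hr => hT r (mem_cons_of_mem _ hr)
    rcases hf : r.findIdx? (fun x => decide (a ≤ x)) with _ | j
    · simp only [ins_cons_of_none hf, forall_mem_cons, pairwise_append, mem_singleton,
        pairwise_singleton, true_and]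
      exact ⟨⟨hr, fun x hx y hy => hy ▸ findIdx?_le_eq_none hf x hx⟩, hrs⟩
    · obtain ⟨hj, hja, hmin⟩ := findIdx?_le_eq_some hf
      simp only [ins_cons_of_some hf, forall_mem_cons]
      exact ⟨pairwise_lt_set hr hj hmin hja, ih hrs _⟩

/-- The row bumping lemma. -/
lemma length_insVals_lt_of_le {T : List (List ℕ)} (hT : ∀ r ∈ T, r.Pairwise (· < ·))
    {a a' : ℕ} (h : a' ≤ a) : (insVals T a).length < (insVals (ins T a).1 a').length := by
  induction T generalizing a a' with
  | nil =>
    have hf : [a].findIdx? (fun x => decide (a' ≤ x)) = some 0 := by simp [findIdx?_cons, h]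
    simp [insVals_cons_of_some hf]
  | cons r rs ih =>
    have hr := hT r mem_cons_self
    have hrs := fun r hr => hT r (mem_cons_of_mem _ hr)
    rcases hf : r.findIdx? (fun x => decide (a ≤ x)) with _ | j
    · rw [ins_cons_of_none hf, insVals_cons_of_none hf]
      rcases hf' : (r ++ [a]).findIdx? (fun x => decide (a' ≤ x)) with _ | j'
      · exact absurd (findIdx?_le_eq_none hf' a (by simp)) (by omega)
      · simp [insVals_cons_of_some hf', length_insVals_pos]
    · obtain ⟨hj, hja, hmin⟩ := findIdx?_le_eq_some hf
      rw [ins_cons_of_some hf, insVals_cons_of_some hf]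
      have hj' : j < (r.set j a).length := by simpa using hj
      have hsj : (r.set j a)[j] = a := by simp
      rcases hf' : (r.set j a).findIdx? (fun x => decide (a' ≤ x)) with _ | j'
      · have ha := getElem_mem hj'
        rw [hsj] at ha
        exact absurd (findIdx?_le_eq_none hf' a ha) (by omega)
      · obtain ⟨hj'l, -, hmin'⟩ := findIdx?_le_eq_some hf'
        have hj'j : j' ≤ j := by
          by_contra! hc
          have := hmin' j hc
          rw [hsj] at this
          omega
        have hbump : (r.set j a).getD j' 0 ≤ r.getD j 0 := by
          rw [getD_eq_getElem _ _ hj'l, getD_eq_getElem _ _ hj]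
          rcases eq_or_lt_of_le hj'j with rfl | hlt
          · simpa using hja
          · rw [getElem_set_ne (by omega)]
            exact le_of_lt (pairwise_iff_getElem.1 hr _ _ _ _ hlt)
        rw [insVals_cons_of_some hf']
        simpa using ih hrs hbump

end Insertion

section Bounded

lemma getD_below (P : List (List ℕ)) (b i : ℕ) :
    (below P b).getD i [] = (P.getD i []).filter (fun x => decide (x < b)) := by
  simp only [below, getD_eq_getElem?_getD, getElem?_map]
  cases P[i]? <;> rfl

lemma length_below (P : List (List ℕ)) (b : ℕ) : (below P b).length = P.length := length_map _

variable {P : List (List ℕ)} {a b : ℕ}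

lemma length_bins_fst : (bins P b a).1.length = max P.length (insVals (below P b) a).length := by
  simp [bins, length_ins_fst, length_below]

lemma bins_getD (i : ℕ) : (bins P b a).1.getD i [] =
    (ins (below P b) a).1.getD i [] ++ (P.getD i []).filter (fun x => decide (b ≤ x)) := by
  have hlen := length_ins_fst (below P b) a
  rw [length_below] at hlen
  rcases Nat.lt_or_ge i (ins (below P b) a).1.length with hi | hi
  · simp [bins, getD_eq_getElem?_getD, hi]
  · rw [getD_eq_default _ _ (by simpa [bins] using hi), getD_eq_default _ _ hi,
      getD_eq_default _ _ (by omega)]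
    rfl

lemma below_append_filter_le (hP : ∀ i, (P.getD i []).Pairwise (· < ·)) (i : ℕ) :
    (below P b).getD i [] ++ (P.getD i []).filter (fun x => decide (b ≤ x)) = P.getD i [] := by
  rw [getD_below, filter_lt_append_filter_le ((hP i).imp le_of_lt)]

lemma pairwise_below (hP : ∀ i, (P.getD i []).Pairwise (· < ·)) :
    ∀ r ∈ below P b, r.Pairwise (· < ·) := by
  intro r hr
  obtain ⟨i, hi, rfl⟩ := getElem_of_mem hr
  rw [← getD_eq_getElem _ [] hi, getD_below]
  exact (hP i).filter _

lemma bins_getD_of_succ_lt (hP : ∀ i, (P.getD i []).Pairwise (· < ·)) {t : ℕ}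
    (ht : t + 1 < (insVals (below P b) a).length) :
    ∃ j, ∃ hj : j < (P.getD t []).length,
      (P.getD t [])[j] = (insVals (below P b) a).getD (t + 1) 0 ∧
      (bins P b a).1.getD t [] = (P.getD t []).set j ((insVals (below P b) a).getD t 0) := by
  obtain ⟨j, hj, hbump, -, hrow⟩ := ins_getD_of_succ_lt (below P b) a ht
  have hsplit := below_append_filter_le (b := b) hP t
  have hj' : j < (P.getD t []).length := by rw [← hsplit, length_append]; omega
  refine ⟨j, hj', ?_, ?_⟩
  · rw [← hbump, getElem_of_eq hsplit.symm hj', getElem_append_left hj]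
  · rw [bins_getD, hrow, ← set_append_left _ _ hj, hsplit]

lemma bins_getD_of_succ_eq {t : ℕ} (ht : t + 1 = (insVals (below P b) a).length) :
    (bins P b a).1.getD t [] = (below P b).getD t [] ++
      (insVals (below P b) a).getD t 0 :: (P.getD t []).filter (fun x => decide (b ≤ x)) := by
  rw [bins_getD, ins_getD_of_succ_eq _ _ ht, append_assoc, singleton_append]

lemma bins_getD_of_le (hP : ∀ i, (P.getD i []).Pairwise (· < ·)) {t : ℕ}
    (ht : (insVals (below P b) a).length ≤ t) : (bins P b a).1.getD t [] = P.getD t [] := by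
  rw [bins_getD, ins_getD_of_le _ _ ht, below_append_filter_le hP]

lemma countLT_bins_getD (hP : ∀ i, (P.getD i []).Pairwise (· < ·)) (t x : ℕ) :
    countLT ((bins P b a).1.getD t []) x +
        (if t + 1 < (insVals (below P b) a).length ∧ (insVals (below P b) a).getD (t + 1) 0 < x
          then 1 else 0) =
      countLT (P.getD t []) x +
        if t < (insVals (below P b) a).length ∧ (insVals (below P b) a).getD t 0 < x
          then 1 else 0 := by
  rcases lt_trichotomy (t + 1) (insVals (below P b) a).length with ht | ht | ht
  · obtain ⟨j, hj, hbump, hrow⟩ := bins_getD_of_succ_lt hP ht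
    simpa only [hrow, ht, true_and, show t < (insVals (below P b) a).length by omega, hbump]
      using countLT_set hj _ x
  · have hsplit := congrArg (countLT · x) (below_append_filter_le (b := b) hP t)
    simp only [countLT_append] at hsplit
    simp only [bins_getD_of_succ_eq ht, countLT_append, countLT_cons, ht, lt_irrefl, false_and,
      if_false, show t < (insVals (below P b) a).length by omega, true_and]
    omega
  · simp only [bins_getD_of_le hP (by omega : (insVals (below P b) a).length ≤ t),
      show ¬t + 1 < (insVals (below P b) a).length by omega,
      show ¬t < (insVals (below P b) a).length by omega, false_and, if_false]

lemma length_bins_getD (hP : ∀ i, (P.getD i []).Pairwise (· < ·)) (t : ℕ) :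
    ((bins P b a).1.getD t []).length =
      (P.getD t []).length + if t + 1 = (insVals (below P b) a).length then 1 else 0 := by
  rcases lt_trichotomy (t + 1) (insVals (below P b) a).length with ht | ht | ht
  · obtain ⟨j, hj, -, hrow⟩ := bins_getD_of_succ_lt hP ht
    rw [hrow, length_set, if_neg ht.ne, add_zero]
  · have hsplit := congrArg length (below_append_filter_le (b := b) hP t)
    simp only [length_append] at hsplit
    simp only [bins_getD_of_succ_eq ht, length_append, length_cons, if_pos ht]
    omega
  · rw [bins_getD_of_le hP (by omega), if_neg ht.ne']
    rfl

lemma insVals_below_gap (hP : ∀ i, (P.getD i []).Pairwise (· < ·)) {t : ℕ}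
    (ht : t < (insVals (below P b) a).length) {y : ℕ} (hy : y ∈ P.getD t []) :
    y < (insVals (below P b) a).getD t 0 ∨
      t + 1 < (insVals (below P b) a).length ∧ (insVals (below P b) a).getD (t + 1) 0 ≤ y ∨
      b ≤ y := by
  by_cases hyb : y < b
  · have hy' : y ∈ (below P b).getD t [] := by
      simp only [getD_below, mem_filter, hy, decide_eq_true_eq, hyb, and_self]
    rcases insVals_gap (pairwise_below hP) a ht hy' with h | h
    · exact Or.inl h
    · exact Or.inr (Or.inl h)
  · exact Or.inr (Or.inr (le_of_not_gt hyb))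

lemma forall_mem_below {p : ℕ → Prop} (hP : ∀ i, ∀ x ∈ P.getD i [], p x) :
    ∀ r ∈ below P b, ∀ x ∈ r, p x ∧ x < b := by
  intro r hr x hx
  obtain ⟨i, hi, rfl⟩ := getElem_of_mem hr
  rw [← getD_eq_getElem _ [] hi, getD_below, mem_filter, decide_eq_true_eq] at hx
  exact ⟨hP i x hx.1, hx.2⟩

lemma lt_of_mem_below : ∀ r ∈ below P b, ∀ x ∈ r, x < b := fun r hr x hx =>
  (forall_mem_below (p := fun _ => True) (fun _ _ _ => trivial) r hr x hx).2

lemma lt_of_mem_ins_below (hab : a < b) : ∀ r ∈ (ins (below P b) a).1, ∀ x ∈ r, x < b :=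
  forall_mem_ins (p := (· < b)) hab lt_of_mem_below

lemma insVals_below_lt (hab : a < b) : ∀ y ∈ insVals (below P b) a, y < b :=
  forall_mem_insVals (p := (· < b)) hab lt_of_mem_below

lemma below_bins (hab : a < b) : below (bins P b a).1 b = (ins (below P b) a).1 := by
  have hlt := lt_of_mem_ins_below (P := P) hab
  have hlen : (below (bins P b a).1 b).length = (ins (below P b) a).1.length := by
    rw [length_below, length_bins_fst, length_ins_fst, length_below]
  refine ext_getElem hlen fun i h₁ h₂ => ?_
  rw [← getD_eq_getElem _ [] h₁, ← getD_eq_getElem _ [] h₂, getD_below, bins_getD,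
    filter_append, filter_eq_self.2, filter_eq_nil_iff.2, append_nil]
  · intro x hx
    simpa using (mem_filter.1 hx).2
  · intro x hx
    rw [getD_eq_getElem _ _ h₂] at hx
    simpa using hlt _ (getElem_mem h₂) x hx

end Bounded

section Step

variable {P Q : List (List ℕ)} {a b : ℕ}

lemma BRSKstep_fst : (BRSKstep (P, Q) (a, b)).1 = (bins P b a).1 := rfl

lemma BRSKstep_snd_getD (hQ : (insVals (below P b) a).length ≤ Q.length + 1) (i : ℕ) :
    (BRSKstep (P, Q) (a, b)).2.getD i [] =
      if i + 1 = (insVals (below P b) a).length then b :: Q.getD i [] else Q.getD i [] := by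
  obtain ⟨k, hk⟩ : ∃ k, (insVals (below P b) a).length = k + 1 :=
    ⟨_, (Nat.succ_pred_eq_of_pos (length_insVals_pos (below P b) a)).symm⟩
  have hbins : (bins P b a).2.length - 1 = k := by simp [bins, length_ins_snd, hk]
  simp only [BRSKstep, hbins, hk, Nat.add_right_cancel_iff]
  split_ifs with h₁ h₂ h₂
  · subst h₂
    rw [getD_eq_getElem _ _ (by simpa using h₁), getElem_set_self]
  · simp only [getD_eq_getElem?_getD, getElem?_set, Ne.symm h₂, if_false]
  · subst h₂
    rw [getD_append_right _ _ _ _ (by omega), getD_eq_default Q [] (by omega),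
      show i - Q.length = 0 by omega]
    rfl
  · rcases Nat.lt_or_ge i Q.length with h | h
    · exact getD_append _ _ _ _ h
    · rw [getD_eq_default Q [] h, getD_eq_default _ _ (by simp; omega)]

lemma length_BRSKstep_snd (hQ : (insVals (below P b) a).length ≤ Q.length + 1) :
    (BRSKstep (P, Q) (a, b)).2.length = max Q.length (insVals (below P b) a).length := by
  have hk : (bins P b a).2.length = (insVals (below P b) a).length := length_ins_snd _ _
  have := length_insVals_pos (below P b) a
  simp only [BRSKstep, hk]
  split_ifs <;> simp <;> omega

lemma countLT_BRSKstep_snd (hQ : (insVals (below P b) a).length ≤ Q.length + 1) (t x : ℕ) :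
    countLT ((BRSKstep (P, Q) (a, b)).2.getD t []) x =
      countLT (Q.getD t []) x +
        if t + 1 = (insVals (below P b) a).length ∧ b < x then 1 else 0 := by
  rw [BRSKstep_snd_getD hQ]
  by_cases ht : t + 1 = (insVals (below P b) a).length <;> simp [ht, countLT_cons]

end Step

/-- The invariant of the bounded RSK; `l` lists the pairs still to be inserted. -/
structure Invariant (P Q : List (List ℕ)) (l : List (ℕ × ℕ)) : Prop where
  sameShape : SameShape P Q
  fst_pairwise : ∀ i, (P.getD i []).Pairwise (· < ·)
  snd_pairwise : ∀ i, (Q.getD i []).Pairwise (· < ·)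
  fst_pos : ∀ i, ∀ x ∈ P.getD i [], 0 < x
  snd_pos : ∀ i, ∀ x ∈ Q.getD i [], 0 < x
  fst_ne_nil : ∀ i < P.length, P.getD i [] ≠ []
  countLT_le : ∀ i x, countLT (P.getD (i + 1) []) x + countLT (Q.getD i []) x ≤
    countLT (P.getD i []) x + countLT (Q.getD (i + 1) []) x
  negative : ∀ i j, j < (P.getD i []).length → (P.getD i []).getD j 0 < (Q.getD i []).getD j 0
  le_snd : ∀ p ∈ l, ∀ i, ∀ x ∈ Q.getD i [], p.2 ≤ x
  route_lt : ∀ a b, l.head? = some (a, b) → ∀ i, b ∈ Q.getD i [] →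
    i + 1 < (insVals (below P b) a).length

namespace Invariant

variable {P Q : List (List ℕ)} {a b : ℕ} {rest : List (ℕ × ℕ)}

lemma length_insVals_le_length_add_one (h : Invariant P Q ((a, b) :: rest)) :
    (insVals (below P b) a).length ≤ Q.length + 1 := by
  have := BRSK.length_insVals_le (below P b) a
  rw [length_below, h.sameShape.1] at this
  exact this

lemma le_of_mem_snd (h : Invariant P Q ((a, b) :: rest)) {i x : ℕ} (hx : x ∈ Q.getD i []) : b ≤ x :=
  h.le_snd (a, b) mem_cons_self i x hx

lemma countLT_snd_eq_zero (h : Invariant P Q ((a, b) :: rest)) {x : ℕ} (hx : x ≤ b) (i : ℕ) :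
    countLT (Q.getD i []) x = 0 :=
  countLT_eq_zero fun _ hy => hx.trans (h.le_of_mem_snd hy)

lemma sameShape_step (h : Invariant P Q ((a, b) :: rest)) :
    SameShape (BRSKstep (P, Q) (a, b)).1 (BRSKstep (P, Q) (a, b)).2 := by
  have hQ := h.length_insVals_le_length_add_one
  refine ⟨?_, fun i => ?_⟩
  · rw [BRSKstep_fst, length_bins_fst, length_BRSKstep_snd hQ, h.sameShape.1]
  · rw [BRSKstep_fst, length_bins_getD h.fst_pairwise, BRSKstep_snd_getD hQ, h.sameShape.2 i]
    split_ifs <;> simp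

lemma fst_pairwise_step (h : Invariant P Q ((a, b) :: rest)) (hab : a < b) (i : ℕ) :
    ((BRSKstep (P, Q) (a, b)).1.getD i []).Pairwise (· < ·) := by
  rw [BRSKstep_fst, bins_getD, pairwise_append]
  refine ⟨(forall_getD_iff Pairwise.nil).2 (pairwise_ins (pairwise_below h.fst_pairwise) a) i,
    (h.fst_pairwise i).filter _, fun x hx y hy => ?_⟩
  have hx : x < b := ((forall_getD_iff (by simp)).2 (lt_of_mem_ins_below hab)) i x hx
  have hy : b ≤ y := by simpa using (mem_filter.1 hy).2
  omega

lemma fst_pos_step (h : Invariant P Q ((a, b) :: rest)) (ha : 0 < a) (i : ℕ) :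
    ∀ x ∈ (BRSKstep (P, Q) (a, b)).1.getD i [], 0 < x := by
  have hins := (forall_getD_iff (by simp)).2
    (forall_mem_ins (p := (0 < ·)) (T := below P b) ha fun r hr x hx =>
      (forall_mem_below h.fst_pos r hr x hx).1)
  intro x hx
  rw [BRSKstep_fst, bins_getD, mem_append] at hx
  exact hx.elim (hins i x) fun hx => h.fst_pos i x (mem_filter.1 hx).1

lemma snd_pairwise_step (h : Invariant P Q ((a, b) :: rest)) (i : ℕ) :
    ((BRSKstep (P, Q) (a, b)).2.getD i []).Pairwise (· < ·) := by
  rw [BRSKstep_snd_getD h.length_insVals_le_length_add_one]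
  split_ifs with hi
  · refine pairwise_cons.2 ⟨fun y hy => lt_of_le_of_ne (h.le_of_mem_snd hy) ?_, h.snd_pairwise i⟩
    rintro rfl
    have := h.route_lt a b rfl i hy
    omega
  · exact h.snd_pairwise i

lemma snd_pos_step (h : Invariant P Q ((a, b) :: rest)) (hb : 0 < b) (i : ℕ) :
    ∀ x ∈ (BRSKstep (P, Q) (a, b)).2.getD i [], 0 < x := by
  rw [BRSKstep_snd_getD h.length_insVals_le_length_add_one]
  split_ifs
  · exact forall_mem_cons.2 ⟨hb, h.snd_pos i⟩
  · exact h.snd_pos i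

lemma fst_ne_nil_step (h : Invariant P Q ((a, b) :: rest)) :
    ∀ i < (BRSKstep (P, Q) (a, b)).1.length, (BRSKstep (P, Q) (a, b)).1.getD i [] ≠ [] := by
  intro i hi hnil
  have hlen := congrArg length hnil
  rw [BRSKstep_fst, length_bins_getD h.fst_pairwise] at hlen
  rw [BRSKstep_fst, length_bins_fst] at hi
  have hL := h.length_insVals_le_length_add_one
  rw [← h.sameShape.1] at hL
  have hk : i + 1 ≠ (insVals (below P b) a).length := fun hk => by simp [hk] at hlen
  rw [if_neg hk, add_zero, length_nil, length_eq_zero_iff] at hlen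
  exact h.fst_ne_nil i (by omega) hlen

/-- Where row `i + 1` gains an entry below `x` and row `i` does not, row `i + 1` had strictly
fewer entries below `x`: the entry `v` bumped out of row `i` lies below `x`, row `i + 1` has no
entries in `[v, x)`, and below `v` the invariant applies. -/
lemma countLT_succ_lt (h : Invariant P Q ((a, b) :: rest)) {i x : ℕ}
    (hi : i + 1 < (insVals (below P b) a).length)
    (hx : (insVals (below P b) a).getD (i + 1) 0 < x) (hxb : x ≤ b)
    (hx' : i + 2 < (insVals (below P b) a).length → x ≤ (insVals (below P b) a).getD (i + 2) 0) :
    countLT (P.getD (i + 1) []) x < countLT (P.getD i []) x := by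
  obtain ⟨j, hj, hbump, -⟩ := bins_getD_of_succ_lt (a := a) h.fst_pairwise hi
  set v := (insVals (below P b) a).getD (i + 1) 0
  have hgap : countLT (P.getD (i + 1) []) x = countLT (P.getD (i + 1) []) v := by
    refine countLT_eq_countLT hx.le fun y hy => ?_
    rcases insVals_below_gap h.fst_pairwise hi hy with hy | ⟨h₁, h₂⟩ | hy
    · exact Or.inl hy
    · exact Or.inr ((hx' h₁).trans h₂)
    · exact Or.inr (hxb.trans hy)
  have hmem : v ∈ P.getD i [] := hbump ▸ getElem_mem hj
  have hold := h.countLT_le i v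
  rw [h.countLT_snd_eq_zero (by omega) (i + 1)] at hold
  have := countLT_lt_countLT hmem le_rfl hx
  omega

lemma countLT_le_step (h : Invariant P Q ((a, b) :: rest)) (hab : a < b) (i x : ℕ) :
    countLT ((BRSKstep (P, Q) (a, b)).1.getD (i + 1) []) x +
        countLT ((BRSKstep (P, Q) (a, b)).2.getD i []) x ≤
      countLT ((BRSKstep (P, Q) (a, b)).1.getD i []) x +
        countLT ((BRSKstep (P, Q) (a, b)).2.getD (i + 1) []) x := by
  have hvb : ∀ t < (insVals (below P b) a).length, (insVals (below P b) a).getD t 0 < b :=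
    fun t ht => insVals_below_lt hab _ (getD_mem ht)
  have hold := h.countLT_le i x
  have hPi := countLT_bins_getD (a := a) (b := b) h.fst_pairwise i x
  have hPi' := countLT_bins_getD (a := a) (b := b) h.fst_pairwise (i + 1) x
  rw [BRSKstep_fst, countLT_BRSKstep_snd h.length_insVals_le_length_add_one,
    countLT_BRSKstep_snd h.length_insVals_le_length_add_one]
  by_cases hard : i + 1 < (insVals (below P b) a).length ∧
      (insVals (below P b) a).getD (i + 1) 0 < x ∧ x ≤ b ∧
      (i + 1 + 1 < (insVals (below P b) a).length → x ≤ (insVals (below P b) a).getD (i + 1 + 1) 0)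
  · obtain ⟨hi, hx, hxb, hx'⟩ := hard
    have := h.countLT_succ_lt hi hx hxb hx'
    have := h.countLT_snd_eq_zero hxb i
    have := h.countLT_snd_eq_zero hxb (i + 1)
    have := insVals_getD_le_getD_succ _ a hi
    split_ifs at * <;> omega
  · have := hvb i
    have := hvb (i + 1)
    have := hvb (i + 1 + 1)
    have := fun hi => insVals_getD_le_getD_succ (below P b) a (t := i) hi
    split_ifs at * <;> omega

lemma negative_step (h : Invariant P Q ((a, b) :: rest)) (hab : a < b) (i j : ℕ)
    (hj : j < ((BRSKstep (P, Q) (a, b)).1.getD i []).length) :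
    ((BRSKstep (P, Q) (a, b)).1.getD i []).getD j 0 <
      ((BRSKstep (P, Q) (a, b)).2.getD i []).getD j 0 := by
  rw [BRSKstep_fst] at hj ⊢
  rw [BRSKstep_snd_getD h.length_insVals_le_length_add_one]
  rcases lt_trichotomy (i + 1) (insVals (below P b) a).length with hi | hi | hi
  · obtain ⟨j₀, hj₀, hbump, hrow⟩ := bins_getD_of_succ_lt h.fst_pairwise hi
    rw [if_neg hi.ne]
    rw [hrow, length_set] at hj
    rw [hrow]
    refine lt_of_le_of_lt (getD_set_le hj₀ ?_ j) (h.negative i j hj)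
    exact hbump ▸ insVals_getD_le_getD_succ _ a hi
  · rw [if_pos hi]
    rw [bins_getD_of_succ_eq hi] at hj ⊢
    have hsplit := below_append_filter_le (b := b) h.fst_pairwise i
    refine getD_append_cons_lt_getD_cons (fun z hz => ?_)
      (insVals_below_lt hab _ (getD_mem (by omega))) (fun z hz => h.le_of_mem_snd hz) ?_
      (by rw [hsplit]; exact h.negative i) hj
    · rw [getD_below] at hz
      simpa using (mem_filter.1 hz).2
    · rw [← h.sameShape.2 i, ← hsplit, length_append]
      omega
  · rw [if_neg hi.ne', bins_getD_of_le h.fst_pairwise (by omega)] at *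
    exact h.negative i j hj

lemma le_snd_step (h : Invariant P Q ((a, b) :: rest)) (hrest : ∀ p ∈ rest, p.2 ≤ b) :
    ∀ p ∈ rest, ∀ i, ∀ x ∈ (BRSKstep (P, Q) (a, b)).2.getD i [], p.2 ≤ x := by
  intro p hp i x hx
  have hold := h.le_snd p (mem_cons_of_mem _ hp) i
  rw [BRSKstep_snd_getD h.length_insVals_le_length_add_one] at hx
  split_ifs at hx
  · exact (mem_cons.1 hx).elim (· ▸ hrest p hp) (hold x)
  · exact hold x hx

lemma route_lt_step (h : Invariant P Q ((a, b) :: rest)) (hab : a < b)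
    (hrest : ∀ p ∈ rest, p.2 < b ∨ b = p.2 ∧ p.1 ≤ a) :
    ∀ a' b', rest.head? = some (a', b') → ∀ i, b' ∈ (BRSKstep (P, Q) (a, b)).2.getD i [] →
      i + 1 < (insVals (below (BRSKstep (P, Q) (a, b)).1 b') a').length := by
  intro a' b' hhead i hi
  have hb : b ≤ b' := by
    rw [BRSKstep_snd_getD h.length_insVals_le_length_add_one] at hi
    split_ifs at hi
    · exact (mem_cons.1 hi).elim (fun h => h.ge) h.le_of_mem_snd
    · exact h.le_of_mem_snd hi
  obtain ⟨rfl, ha'⟩ : b = b' ∧ a' ≤ a := by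
    have := hrest _ (mem_of_mem_head? hhead)
    simp only at this
    omega
  have hroute : i + 1 ≤ (insVals (below P b) a).length := by
    rw [BRSKstep_snd_getD h.length_insVals_le_length_add_one] at hi
    split_ifs at hi with hk
    · exact hk.le
    · exact (h.route_lt a b rfl i hi).le
  rw [BRSKstep_fst, below_bins hab]
  exact lt_of_le_of_lt hroute (length_insVals_lt_of_le (pairwise_below h.fst_pairwise) ha')

lemma step (h : Invariant P Q ((a, b) :: rest)) (ha : 0 < a) (hab : a < b)
    (hrest : ∀ p ∈ rest, p.2 < b ∨ b = p.2 ∧ p.1 ≤ a) :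
    Invariant (BRSKstep (P, Q) (a, b)).1 (BRSKstep (P, Q) (a, b)).2 rest where
  sameShape := h.sameShape_step
  fst_pairwise := h.fst_pairwise_step hab
  snd_pairwise := h.snd_pairwise_step
  fst_pos := h.fst_pos_step ha
  snd_pos := h.snd_pos_step (ha.trans hab)
  fst_ne_nil := h.fst_ne_nil_step
  countLT_le := h.countLT_le_step hab
  negative := h.negative_step hab
  le_snd := h.le_snd_step fun p hp => by rcases hrest p hp with hp | hp <;> omega
  route_lt := h.route_lt_step hab hrest

lemma empty (l : List (ℕ × ℕ)) : Invariant [] [] l where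
  sameShape := ⟨rfl, fun _ => rfl⟩
  fst_pairwise _ := Pairwise.nil
  snd_pairwise _ := Pairwise.nil
  fst_pos _ := by simp
  snd_pos _ := by simp
  fst_ne_nil _ h := absurd h (Nat.not_lt_zero _)
  countLT_le _ _ := by simp
  negative _ _ h := absurd h (Nat.not_lt_zero _)
  le_snd _ _ _ := by simp
  route_lt _ _ _ _ := by simp

lemma foldl_BRSKstep {l : List (ℕ × ℕ)} (h : Invariant P Q l)
    (hneg : ∀ p ∈ l, 0 < p.1 ∧ p.1 < p.2) (hsort : LexSorted l) :
    Invariant (l.foldl BRSKstep (P, Q)).1 (l.foldl BRSKstep (P, Q)).2 [] := by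
  induction l generalizing P Q with
  | nil => exact h
  | cons p rest ih =>
    obtain ⟨hhead, hrest⟩ := pairwise_cons.1 hsort
    have hp := hneg p mem_cons_self
    exact ih (h.step hp.1 hp.2 hhead) (fun q hq => hneg q (mem_cons_of_mem _ hq)) hrest

lemma isNegSSNB (h : Invariant P Q []) : IsNegSSNB (P, Q) := by
  refine ⟨h.sameShape, ?_, ?_, (forall_getD_iff (by simp)).1 h.fst_pos,
    (forall_getD_iff (by simp)).1 h.snd_pos, fun r hr => ?_, fun i hi => ?_,
    fun i _ => h.negative i⟩
  · exact fun r hr => isChain_iff_pairwise.2 ((forall_getD_iff Pairwise.nil).1 h.fst_pairwise r hr)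
  · exact fun r hr => isChain_iff_pairwise.2 ((forall_getD_iff Pairwise.nil).1 h.snd_pairwise r hr)
  · obtain ⟨i, hi, rfl⟩ := getElem_of_mem hr
    rw [← getD_eq_getElem _ [] hi]
    exact h.fst_ne_nil i hi
  · refine twLE_of_countLT_le ?_ fun x => ?_
    · simp only [Multiset.card_add, Multiset.coe_card, h.sameShape.2]
      omega
    · rw [countLT_sort_coe_add, countLT_sort_coe_add]
      exact h.countLT_le i x

end Invariant

end BRSK

/-- If `U` is a negative multiset on ℕ² (listed in lexicographic order), then
`BRSK U` is a negative semistandard notched bitableau. -/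
theorem brsk_negative_ssnb (l : List (ℕ × ℕ))
    (hneg : ∀ p ∈ l, 0 < p.1 ∧ p.1 < p.2) (hsort : LexSorted l) :
    IsNegSSNB (BRSK l) :=
  (BRSK.Invariant.empty l).foldl_BRSKstep hneg hsort |>.isNegSSNB
end

section
/- Let T be a completely disjointed negative finite subset T = {(e_1,f_1),...,(e_m,f_m)} of ℕ² with f_1 < ... < f_m, and let 𝒯 = {σ(T) : σ ∈ S_m, σ(T) negative}, where σ(T) = {(e_{σ(1)}, f_1),...,(e_{σ(m)}, f_m)}. Then the unique minimal element T̃ of 𝒯 under the total order (R <_lex S if at the smallest index i with a_i ≠ b_i one has a_i > b_i, where a_i, b_i are the first coordinates paired with f_i) is a negative twisted chain. -/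
/-- `(e,f) ≺ (g,h)` for negative elements of ℕ²: `f < h` and `e > g`. -/
def precc (p q : ℕ × ℕ) : Prop := p.2 < q.2 ∧ q.1 < p.1

/-- `(e,f) ⊴ (g,h)`: `f ≤ h` and `e ≥ g`. -/
def tle (p q : ℕ × ℕ) : Prop := p.2 ≤ q.2 ∧ q.1 ≤ p.1

/-- A negative twisted chain: a finite, completely disjointed set of negative
pairs of positive integers such that any two distinct elements are
`≺`-comparable or have non-negative meet. -/
def NegTwistedChain (T : Set (ℕ × ℕ)) : Prop :=
  T.Finite ∧ (∀ p ∈ T, 0 < p.1 ∧ p.1 < p.2) ∧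
  (∀ p ∈ T, ∀ q ∈ T, p ≠ q →
    p.1 ≠ q.1 ∧ p.1 ≠ q.2 ∧ p.2 ≠ q.1 ∧ p.2 ≠ q.2) ∧
  (∀ p ∈ T, ∀ q ∈ T, p ≠ q →
    precc p q ∨ precc q p ∨ ¬ (max p.1 q.1 < min p.2 q.2))

/-- `τ <_lex σ`: at the smallest index where the first coordinates differ,
`τ`'s first coordinate is larger. -/
def LexLt {m : ℕ} (e : Fin m → ℕ) (τ σ : Equiv.Perm (Fin m)) : Prop :=
  ∃ i : Fin m, (∀ j, j < i → e (τ j) = e (σ j)) ∧ e (σ i) < e (τ i)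

/-- The minimal element `T̃` of the orbit set `𝒯` of a completely disjointed
negative set under the reverse-lexicographic order is a negative twisted
chain. -/
theorem min_rearrangement_twisted_chain (m : ℕ) (e f : Fin m → ℕ)
    (hpos : ∀ i, 0 < e i) (hf : StrictMono f)
    (hdisj : (∀ i j, e i ≠ f j) ∧ Function.Injective e)
    (hneg : ∀ i, e i < f i)
    (σ : Equiv.Perm (Fin m)) (hσ : ∀ i, e (σ i) < f i)
    (hmin : ∀ τ : Equiv.Perm (Fin m), (∀ i, e (τ i) < f i) → ¬ LexLt e τ σ) :
    NegTwistedChain {p | ∃ i, p = (e (σ i), f i)} := by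
  obtain ⟨hef, einj⟩ := hdisj
  have finj : Function.Injective f := hf.injective
  have eσinj : ∀ {i j : Fin m}, e (σ i) = e (σ j) → i = j := by
    intro i j h; exact σ.injective (einj h)
  have key : ∀ i j : Fin m, i < j →
      e (σ j) < e (σ i) ∨ ¬ (max (e (σ i)) (e (σ j)) < min (f i) (f j)) := by
    intro i j hij
    by_contra h
    push_neg at h
    obtain ⟨h1, h2⟩ := h
    have hlt : e (σ i) < e (σ j) :=
      lt_of_le_of_ne h1 (fun hh => hij.ne (eσinj hh))
    have hji : e (σ j) < f i :=
      lt_of_lt_of_le (lt_of_le_of_lt (le_max_right _ _) h2) (min_le_left _ _)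
    set τ : Equiv.Perm (Fin m) := σ * Equiv.swap i j with hτ
    have hτi : τ i = σ j := by simp [hτ, Equiv.Perm.mul_apply]
    have hτj : τ j = σ i := by simp [hτ, Equiv.Perm.mul_apply]
    have hτk : ∀ k, k ≠ i → k ≠ j → τ k = σ k := by
      intro k hki hkj
      simp [hτ, Equiv.Perm.mul_apply, Equiv.swap_apply_of_ne_of_ne hki hkj]
    have hτgood : ∀ k, e (τ k) < f k := by
      intro k
      by_cases hki : k = i
      · subst hki; rw [hτi]; exact hji
      · by_cases hkj : k = j
        · subst hkj; rw [hτj]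
          exact lt_trans (hσ i) (hf hij)
        · rw [hτk k hki hkj]; exact hσ k
    refine hmin τ hτgood ⟨i, ?_, ?_⟩
    · intro k hk
      rw [hτk k hk.ne (hk.trans hij).ne]
    · rw [hτi]; exact hlt
  refine ⟨?_, ?_, ?_, ?_⟩
  · have : {p : ℕ × ℕ | ∃ i, p = (e (σ i), f i)} =
        Set.range (fun i => (e (σ i), f i)) := by
      ext p; simp [eq_comm, Set.range]
    rw [this]; exact Set.finite_range _
  · rintro p ⟨i, rfl⟩; exact ⟨hpos _, hσ i⟩
  · rintro p ⟨i, rfl⟩ q ⟨j, rfl⟩ hpq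
    have hij : i ≠ j := by rintro rfl; exact hpq rfl
    exact ⟨fun h => hij (eσinj h), hef _ _, fun h => hef _ _ h.symm,
      fun h => hij (finj h)⟩
  · rintro p ⟨i, rfl⟩ q ⟨j, rfl⟩ hpq
    have hij : i ≠ j := by rintro rfl; exact hpq rfl
    rcases hij.lt_or_gt with h | h
    · rcases key i j h with hk | hk
      · exact Or.inl ⟨hf h, hk⟩
      · exact Or.inr (Or.inr hk)
    · rcases key j i h with hk | hk
      · exact Or.inr (Or.inl ⟨hf h, hk⟩)
      · refine Or.inr (Or.inr ?_)
        rw [max_comm, min_comm] at hk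
        exact hk
end

section
/- Let R = {(a_1,f_1),...,(a_m,f_m)} be a negative twisted chain with f_1 < ... < f_m that is not a minimal element of its orbit set 𝒯 under the lexicographic order; specifically, if there exist i < j with (a_i,f_i) ⊀ (a_j,f_j), (a_j,f_j) ⊀ (a_i,f_i), and (a_i,f_i) ∧ (a_j,f_j) negative, then a_i < a_j < f_i < f_j and swapping a_i and a_j yields a negative set that is strictly smaller in the order <_lex. Consequently, the minimal element of 𝒯 is a negative twisted chain. -/
lemma swap_key (m : ℕ) (e f : Fin m → ℕ)
    (hf : StrictMono f)
    (hdisj : (∀ i j, e i ≠ f j) ∧ Function.Injective e) :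
    ∀ σ : Equiv.Perm (Fin m), (∀ i, e (σ i) < f i) →
      ∀ i j : Fin m, i < j →
        ¬ precc (e (σ i), f i) (e (σ j), f j) →
        ¬ precc (e (σ j), f j) (e (σ i), f i) →
        max (e (σ i)) (e (σ j)) < min (f i) (f j) →
          e (σ i) < e (σ j) ∧ e (σ j) < f i ∧ f i < f j ∧
          (∀ k, e ((σ * Equiv.swap i j) k) < f k) ∧
          LexLt e (σ * Equiv.swap i j) σ := by
  intro σ hσ i j hij h1 h2 h3
  have hfij : f i < f j := hf hij
  have hene : e (σ i) ≠ e (σ j) := fun h =>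
    absurd (σ.injective (hdisj.2 h)) hij.ne
  have h1' : e (σ i) < e (σ j) := by
    rcases lt_or_gt_of_ne hene with h | h
    · exact h
    · exact absurd ⟨hfij, h⟩ h1
  have h2' : e (σ j) < f i :=
    (le_max_right _ _).trans_lt (h3.trans_le (min_le_left _ _))
  refine ⟨h1', h2', hfij, ?_, ?_⟩
  · intro k
    rw [Equiv.Perm.mul_apply]
    rcases eq_or_ne k i with rfl | hki
    · rw [Equiv.swap_apply_left]; exact h2'
    rcases eq_or_ne k j with rfl | hkj
    · rw [Equiv.swap_apply_right]; exact (h1'.trans h2').trans hfij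
    · rw [Equiv.swap_apply_of_ne_of_ne hki hkj]; exact hσ k
  · refine ⟨i, fun k hk => ?_, ?_⟩
    · rw [Equiv.Perm.mul_apply, Equiv.swap_apply_of_ne_of_ne hk.ne (hk.trans hij).ne]
    · rw [Equiv.Perm.mul_apply, Equiv.swap_apply_left]; exact h1'

/-- If a negative rearrangement `σ(T)` has indices `i < j` whose elements are
`≺`-incomparable with negative meet, then `a_i < a_j < f_i < f_j` and swapping
`a_i, a_j` gives a negative rearrangement strictly smaller in `<_lex`;
consequently the minimal element of `𝒯` is a negative twisted chain. -/
theorem swap_decreases_and_min_is_twisted (m : ℕ) (e f : Fin m → ℕ)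
    (hpos : ∀ i, 0 < e i) (hf : StrictMono f)
    (hdisj : (∀ i j, e i ≠ f j) ∧ Function.Injective e)
    (hneg : ∀ i, e i < f i) :
    (∀ σ : Equiv.Perm (Fin m), (∀ i, e (σ i) < f i) →
      ∀ i j : Fin m, i < j →
        ¬ precc (e (σ i), f i) (e (σ j), f j) →
        ¬ precc (e (σ j), f j) (e (σ i), f i) →
        max (e (σ i)) (e (σ j)) < min (f i) (f j) →
          e (σ i) < e (σ j) ∧ e (σ j) < f i ∧ f i < f j ∧
          (∀ k, e ((σ * Equiv.swap i j) k) < f k) ∧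
          LexLt e (σ * Equiv.swap i j) σ) ∧
    (∀ σ : Equiv.Perm (Fin m), (∀ i, e (σ i) < f i) →
      (∀ τ : Equiv.Perm (Fin m), (∀ i, e (τ i) < f i) → ¬ LexLt e τ σ) →
      NegTwistedChain {p | ∃ i, p = (e (σ i), f i)}) := by
  refine ⟨swap_key m e f hf hdisj, ?_⟩
  intro σ hσ hmin
  refine ⟨?_, ?_, ?_, ?_⟩
  · have h : {p | ∃ i, p = (e (σ i), f i)} = Set.range (fun i => (e (σ i), f i)) := by
      ext p; simp [eq_comm, Set.range]
    rw [h]; exact Set.finite_range _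
  · rintro p ⟨i, rfl⟩; exact ⟨hpos _, hσ i⟩
  · rintro p ⟨i, rfl⟩ q ⟨j, rfl⟩ hpq
    have hij : i ≠ j := by rintro rfl; exact hpq rfl
    exact ⟨fun h => hij (σ.injective (hdisj.2 h)), hdisj.1 _ _,
      fun h => hdisj.1 (σ j) i h.symm, fun h => hij (hf.injective h)⟩
  · rintro p ⟨i, rfl⟩ q ⟨j, rfl⟩ hpq
    have hij : i ≠ j := by rintro rfl; exact hpq rfl
    by_contra hcon
    push_neg at hcon
    obtain ⟨h1, h2, h3⟩ := hcon
    rcases hij.lt_or_gt with h | h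
    · obtain ⟨_, _, _, hneg', hlex⟩ :=
        swap_key m e f hf hdisj σ hσ i j h h1 h2 h3
      exact hmin _ hneg' hlex
    · obtain ⟨_, _, _, hneg', hlex⟩ :=
        swap_key m e f hf hdisj σ hσ j i h h2 h1
          (by rwa [max_comm, min_comm] at h3)
      exact hmin _ hneg' hlex
end
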